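/- On ℝ³ with coordinates (y,z,p), the 1-forms s₁ = τ₁ + y²τ₂, s₂ = τ₂, s₃ = τ₃ − 2y τ₂, where τ₁ = dy + y dz, τ₂ = −(dp − p dz), τ₃ = −dz, satisfy the structure equations ds₁ = −s₁∧s₃, ds₂ = s₂∧s₃, ds₃ = −2 s₁∧s₂ at every point of ℝ³. -/

import Mathlib

/-!
In the coordinate coframe, s₁ = dy + (y + y²p) dz − y² dp, s₂ = p dz − dp and
s₃ = 2y dp − (1 + 2yp) dz. Since d(∑ fᵢ dxᵢ) = ∑ dfᵢ ∧ dxᵢ, both sides of each structure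
equation are explicit 2-forms with polynomial coefficients, and these coefficients agree.
-/

noncomputable section

/-- the coordinate differentials dy, dz, dp on ℝ³ with coordinates (y,z,p) -/
def dc (i : Fin 3) : (Fin 3 → ℝ) →L[ℝ] ℝ := ContinuousLinearMap.proj i

/-- exterior derivative of a 1-form -/
def extd {n : ℕ} (ω : (Fin n → ℝ) → ((Fin n → ℝ) →L[ℝ] ℝ)) :
    (Fin n → ℝ) → (Fin n → ℝ) → (Fin n → ℝ) → ℝ :=
  fun a u v => fderiv ℝ (fun x => ω x v) a u - fderiv ℝ (fun x => ω x u) a v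

/-- wedge product of two 1-forms -/
def wedge {n : ℕ} (ω η : (Fin n → ℝ) → ((Fin n → ℝ) →L[ℝ] ℝ)) :
    (Fin n → ℝ) → (Fin n → ℝ) → (Fin n → ℝ) → ℝ :=
  fun a u v => ω a u * η a v - ω a v * η a u

/-- τ₁ = dy + y dz -/
def τ₁ : (Fin 3 → ℝ) → ((Fin 3 → ℝ) →L[ℝ] ℝ) := fun a => dc 0 + a 0 • dc 1

/-- τ₂ = −(dp − p dz) -/
def τ₂ : (Fin 3 → ℝ) → ((Fin 3 → ℝ) →L[ℝ] ℝ) := fun a => -(dc 2 - a 2 • dc 1)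

/-- τ₃ = −dz -/
def τ₃ : (Fin 3 → ℝ) → ((Fin 3 → ℝ) →L[ℝ] ℝ) := fun _ => -dc 1

/-- s₁ = τ₁ + y²τ₂ -/
def s₁ : (Fin 3 → ℝ) → ((Fin 3 → ℝ) →L[ℝ] ℝ) := fun a => τ₁ a + (a 0)^2 • τ₂ a

/-- s₂ = τ₂ -/
def s₂ : (Fin 3 → ℝ) → ((Fin 3 → ℝ) →L[ℝ] ℝ) := τ₂

/-- s₃ = τ₃ − 2y τ₂ -/
def s₃ : (Fin 3 → ℝ) → ((Fin 3 → ℝ) →L[ℝ] ℝ) := fun a => τ₃ a - (2 * a 0) • τ₂ a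

open ContinuousLinearMap

def coordForm {n : ℕ} (f : Fin n → (Fin n → ℝ) → ℝ) :
    (Fin n → ℝ) → ((Fin n → ℝ) →L[ℝ] ℝ) :=
  fun x => ∑ i, f i x • proj i

theorem coordForm_apply {n : ℕ} (f : Fin n → (Fin n → ℝ) → ℝ) (x v : Fin n → ℝ) :
    coordForm f x v = ∑ i, f i x * v i := by
  simp [coordForm]

theorem extd_coordForm {n : ℕ} {f : Fin n → (Fin n → ℝ) → ℝ} {a : Fin n → ℝ}
    (hf : ∀ i, DifferentiableAt ℝ (f i) a) (u v : Fin n → ℝ) :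
    extd (coordForm f) a u v = ∑ i, (fderiv ℝ (f i) a u * v i - fderiv ℝ (f i) a v * u i) := by
  have fderiv_eval : ∀ w, fderiv ℝ (fun x => coordForm f x w) a = ∑ i, w i • fderiv ℝ (f i) a := by
    intro w
    simp only [coordForm_apply]
    rw [fderiv_fun_sum fun i _ => (hf i).mul_const _]
    simp [fderiv_mul_const (hf _)]
  simp [extd, fderiv_eval, Finset.sum_sub_distrib, mul_comm]

theorem fderiv_eval_apply {ι : Type*} [Fintype ι] (i : ι) (a u : ι → ℝ) :
    fderiv ℝ (fun x : ι → ℝ => x i) a u = u i := by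
  rw [(hasFDerivAt_apply i a).fderiv]
  rfl

theorem s₁_eq_coordForm :
    s₁ = coordForm ![fun _ => 1, fun x => x 0 + x 0 ^ 2 * x 2, fun x => -x 0 ^ 2] := by
  ext x v
  simp only [s₁, τ₁, τ₂, dc, coordForm_apply, Fin.sum_univ_three, Matrix.cons_val, add_apply,
    sub_apply, neg_apply, smul_apply, proj_apply, smul_eq_mul]
  ring

theorem s₂_eq_coordForm : s₂ = coordForm ![fun _ => 0, fun x => x 2, fun _ => -1] := by
  ext x v
  simp only [s₂, τ₂, dc, coordForm_apply, Fin.sum_univ_three, Matrix.cons_val, sub_apply,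
    neg_apply, smul_apply, proj_apply, smul_eq_mul]
  ring

theorem s₃_eq_coordForm :
    s₃ = coordForm ![fun _ => 0, fun x => -(1 + 2 * x 0 * x 2), fun x => 2 * x 0] := by
  ext x v
  simp only [s₃, τ₂, τ₃, dc, coordForm_apply, Fin.sum_univ_three, Matrix.cons_val, sub_apply,
    neg_apply, smul_apply, proj_apply, smul_eq_mul]
  ring

-- `u i * v j - v i * u j` is `(dxᵢ ∧ dxⱼ)(u, v)`.
theorem extd_s₁ (a u v : Fin 3 → ℝ) :
    extd s₁ a u v = (1 + 2 * a 0 * a 2) * (u 0 * v 1 - v 0 * u 1)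
      + a 0 ^ 2 * (u 2 * v 1 - v 2 * u 1) - 2 * a 0 * (u 0 * v 2 - v 0 * u 2) := by
  rw [s₁_eq_coordForm, extd_coordForm fun i => by fin_cases i <;> simp <;> fun_prop]
  simp (disch := fun_prop) only [Fin.sum_univ_three, Matrix.cons_val, fderiv_fun_const,
    fderiv_fun_add, fderiv_fun_mul, fderiv_fun_pow, fderiv_fun_neg, fderiv_eval_apply, add_apply,
    neg_apply, smul_apply, zero_apply, Pi.zero_apply, smul_eq_mul]
  ring

theorem extd_s₂ (a u v : Fin 3 → ℝ) :
    extd s₂ a u v = u 2 * v 1 - v 2 * u 1 := by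
  rw [s₂_eq_coordForm, extd_coordForm fun i => by fin_cases i <;> simp [differentiableAt_apply]]
  simp (disch := fun_prop) only [Fin.sum_univ_three, Matrix.cons_val, fderiv_fun_const,
    fderiv_eval_apply, zero_apply, Pi.zero_apply]
  ring

theorem extd_s₃ (a u v : Fin 3 → ℝ) :
    extd s₃ a u v = -2 * a 2 * (u 0 * v 1 - v 0 * u 1)
      - 2 * a 0 * (u 2 * v 1 - v 2 * u 1) + 2 * (u 0 * v 2 - v 0 * u 2) := by
  rw [s₃_eq_coordForm, extd_coordForm fun i => by fin_cases i <;> simp <;> fun_prop]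
  simp (disch := fun_prop) only [Fin.sum_univ_three, Matrix.cons_val, fderiv_fun_const,
    fderiv_fun_add, fderiv_fun_mul, fderiv_fun_neg, fderiv_eval_apply, add_apply,
    neg_apply, smul_apply, zero_apply, Pi.zero_apply, smul_eq_mul]
  ring

theorem sl2_coframe_structure_equations :
    ∀ (a u v : Fin 3 → ℝ),
      extd s₁ a u v = -(wedge s₁ s₃ a u v) ∧
      extd s₂ a u v = wedge s₂ s₃ a u v ∧
      extd s₃ a u v = -2 * wedge s₁ s₂ a u v := by
  intro a u v
  rw [extd_s₁, extd_s₂, extd_s₃]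
  simp only [wedge, s₁_eq_coordForm, s₂_eq_coordForm, s₃_eq_coordForm, coordForm_apply,
    Fin.sum_univ_three, Matrix.cons_val]
  refine ⟨?_, ?_, ?_⟩ <;> ring

end
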